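/- Let r be an odd integer with r ≥ 3 and n ≥ 2, and let W ⊆ 2^{[n]} be a weakly r-separated collection. For an integer i, let T^i := {A ⊆ [n−1] : |A| = i, A ∈ W, and A∪{n} ∈ W}. For j = 0,1,…,n−1, let S^j be the collection of all A ⊆ [n−1] with |A| = j that are unions of at most (r−1)/2 intervals of [n−1], and let A^j be the collection of all A ⊆ [n−1] with |A| = j such that [n−1]∖A is a union of at most (r−1)/2 intervals of [n−1]. Then the collection D^i := T^i ∪ S^{i+1} ∪ S^{i+2} ∪ ⋯ ∪ S^{n−1} ∪ A^0 ∪ A^1 ∪ ⋯ ∪ A^{i−1} is weakly (r−2)-separated. -/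

import Mathlib

open Finset

/-- An alternating sequence for the pair of sets `A`, `B`: a strictly increasing
sequence whose odd-position elements lie in one of `A \ B`, `B \ A` and whose
even-position elements lie in the other. -/
def IsAltSeq (A B : Finset ℕ) {m : ℕ} (f : Fin m → ℕ) : Prop :=
  StrictMono f ∧
    ((∀ j : Fin m, (j : ℕ) % 2 = 0 → f j ∈ A \ B) ∧
        (∀ j : Fin m, (j : ℕ) % 2 = 1 → f j ∈ B \ A) ∨
      (∀ j : Fin m, (j : ℕ) % 2 = 0 → f j ∈ B \ A) ∧
        (∀ j : Fin m, (j : ℕ) % 2 = 1 → f j ∈ A \ B))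

/-- `altLen A B` is the maximum length of an alternating sequence for `A`, `B`. -/
noncomputable def altLen (A B : Finset ℕ) : ℕ :=
  sSup {m : ℕ | ∃ f : Fin m → ℕ, IsAltSeq A B f}

/-- `A` surrounds `B`:  `min (A \ B) < min (B \ A)` and `max (B \ A) < max (A \ B)`. -/
def Surrounds (A B : Finset ℕ) : Prop :=
  (A \ B).min < (B \ A).min ∧ (B \ A).max < (A \ B).max

/-- Weak `r`-separation for an odd `r`. -/
def WeaklySep (r : ℕ) (A B : Finset ℕ) : Prop :=
  altLen A B ≤ r + 2 ∧
    (altLen A B = r + 2 →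
      Surrounds A B ∧ A.card ≤ B.card ∨ Surrounds B A ∧ B.card ≤ A.card)

/-- `X` is a union of at most `k` intervals of `[m]`. -/
def UnionIntervals (m k : ℕ) (X : Finset ℕ) : Prop :=
  ∃ k' ≤ k, ∃ e : Fin k' → ℕ × ℕ,
    (∀ j, 1 ≤ (e j).1 ∧ (e j).1 ≤ (e j).2 ∧ (e j).2 ≤ m) ∧
    X = Finset.univ.sup fun j => Finset.Icc (e j).1 (e j).2

/-- Membership in D^i = T^i ∪ S^{i+1} ∪ ⋯ ∪ S^{n-1} ∪ A^0 ∪ ⋯ ∪ A^{i-1}: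
either A is a twin of level i, or A has level > i and is a union of at most
(r-1)/2 intervals, or A has level < i and its complement in [n-1] is a union
of at most (r-1)/2 intervals. -/
def MemDscr (r n i : ℕ) (W : Finset (Finset ℕ)) (A : Finset ℕ) : Prop :=
  A ⊆ Finset.Icc 1 (n - 1) ∧
    ((A.card = i ∧ A ∈ W ∧ insert n A ∈ W) ∨
      (i < A.card ∧ A.card ≤ n - 1 ∧ UnionIntervals (n - 1) ((r - 1) / 2) A) ∨
      (A.card < i ∧ UnionIntervals (n - 1) ((r - 1) / 2) (Finset.Icc 1 (n - 1) \ A)))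

/-!
An increasing sequence alternating between the inside and the outside of a union of `k`
intervals enters that union at most `k` times, so it has length at most `2k + 1`, and at most
`2k` if it starts inside. Applied to `X = A` when `A ∈ S^j` and to `X = [n-1] \ A` when
`A ∈ A^j`, this gives `alt(A, B) ≤ r` unless both sets are twins of level `i`, and shows that an
alternating sequence of length `r` starting and ending in `A \ B` forces `A ∉ S^j`, `B ∉ A^j`,
hence `|A| ≤ i ≤ |B|`. For twins, an alternating sequence of length `r + 1` extended by `n`
would violate the weak `r`-separation of `A ∪ {n}` and `B` (or of `B ∪ {n}` and `A`).
-/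

def IsAltSeqFrom (A B : Finset ℕ) {m : ℕ} (f : Fin m → ℕ) : Prop :=
  StrictMono f ∧ (∀ j : Fin m, (j : ℕ) % 2 = 0 → f j ∈ A \ B) ∧
    (∀ j : Fin m, (j : ℕ) % 2 = 1 → f j ∈ B \ A)

section AltSeq

variable {A B A' B' : Finset ℕ} {m : ℕ} {f : Fin m → ℕ}

lemma isAltSeq_iff : IsAltSeq A B f ↔ IsAltSeqFrom A B f ∨ IsAltSeqFrom B A f :=
  and_or_left

namespace IsAltSeqFrom

lemma isAltSeq (hf : IsAltSeqFrom A B f) : IsAltSeq A B f :=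
  isAltSeq_iff.2 (.inl hf)

lemma isAltSeq_swap (hf : IsAltSeqFrom B A f) : IsAltSeq A B f :=
  isAltSeq_iff.2 (.inr hf)

lemma mono (hf : IsAltSeqFrom A B f) (hA : A \ B ⊆ A' \ B') (hB : B \ A ⊆ B' \ A') :
    IsAltSeqFrom A' B' f :=
  ⟨hf.1, fun j hj => hA (hf.2.1 j hj), fun j hj => hB (hf.2.2 j hj)⟩

lemma castLE (hf : IsAltSeqFrom A B f) {k : ℕ} (hk : k ≤ m) :
    IsAltSeqFrom A B (f ∘ Fin.castLE hk) :=
  ⟨hf.1.comp (Fin.strictMono_castLE hk), fun _ hj => hf.2.1 _ hj, fun _ hj => hf.2.2 _ hj⟩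

lemma cons (hf : IsAltSeqFrom A B f) {b : ℕ} (hb : b ∈ B \ A) (hlt : ∀ j, b < f j) :
    IsAltSeqFrom B A (Fin.cons b f : Fin (m + 1) → ℕ) := by
  refine ⟨Fin.strictMono_cons.2 ⟨hlt, hf.1⟩, Fin.cases (fun _ => hb) fun j hj => ?_,
    Fin.cases (fun h => by simp at h) fun j hj => ?_⟩
  · rw [Fin.cons_succ]
    exact hf.2.2 j (by rw [Fin.val_succ] at hj; omega)
  · rw [Fin.cons_succ]
    exact hf.2.1 j (by rw [Fin.val_succ] at hj; omega)

lemma snoc (hf : IsAltSeqFrom A B f) {b : ℕ} (hlt : ∀ j, f j < b)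
    (heven : m % 2 = 0 → b ∈ A \ B) (hodd : m % 2 = 1 → b ∈ B \ A) :
    IsAltSeqFrom A B (Fin.snoc f b : Fin (m + 1) → ℕ) := by
  refine ⟨?_, Fin.lastCases (fun h => ?_) (fun j hj => ?_),
    Fin.lastCases (fun h => ?_) (fun j hj => ?_)⟩
  · rw [← Fin.insertNth_last', Fin.strictMono_insertNth_iff]
    exact ⟨hf.1, fun j _ => hlt j, fun j h => absurd h (Fin.castSucc_lt_last j).not_ge⟩
  · simpa using heven (by simpa using h)
  · simpa using hf.2.1 j (by simpa using hj)
  · simpa using hodd (by simpa using h)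
  · simpa using hf.2.2 j (by simpa using hj)

end IsAltSeqFrom

lemma IsAltSeq.length_le_card_union (hf : IsAltSeq A B f) : m ≤ #(A ∪ B) := by
  have hmem : ∀ j, f j ∈ A ∪ B := by
    intro j
    rcases isAltSeq_iff.1 hf with hf | hf <;> rcases Nat.mod_two_eq_zero_or_one j with hj | hj
    exacts [mem_union_left _ (mem_sdiff.1 (hf.2.1 j hj)).1,
      mem_union_right _ (mem_sdiff.1 (hf.2.2 j hj)).1,
      mem_union_right _ (mem_sdiff.1 (hf.2.1 j hj)).1,
      mem_union_left _ (mem_sdiff.1 (hf.2.2 j hj)).1]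
  simpa using
    card_le_card_of_injOn (s := univ) f (fun j _ => hmem j) hf.1.injective.injOn

lemma bddAbove_altLengths (A B : Finset ℕ) :
    BddAbove {m : ℕ | ∃ f : Fin m → ℕ, IsAltSeq A B f} :=
  ⟨#(A ∪ B), fun _ ⟨_, hf⟩ => hf.length_le_card_union⟩

lemma IsAltSeq.le_altLen (hf : IsAltSeq A B f) : m ≤ altLen A B :=
  le_csSup (bddAbove_altLengths A B) ⟨f, hf⟩

lemma exists_isAltSeq_altLen (A B : Finset ℕ) :
    ∃ f : Fin (altLen A B) → ℕ, IsAltSeq A B f :=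
  Nat.sSup_mem (s := {m : ℕ | ∃ f : Fin m → ℕ, IsAltSeq A B f})
    ⟨0, fun _ => 0, fun a => a.elim0, .inl ⟨fun j => j.elim0, fun j => j.elim0⟩⟩
    (bddAbove_altLengths A B)

lemma altLen_le_iff {N : ℕ} :
    altLen A B ≤ N ↔ ∀ (m : ℕ) (f : Fin m → ℕ), IsAltSeq A B f → m ≤ N := by
  refine ⟨fun h m f hf => hf.le_altLen.trans h, fun h => ?_⟩
  obtain ⟨f, hf⟩ := exists_isAltSeq_altLen A B
  exact h _ f hf

lemma altLen_comm (A B : Finset ℕ) : altLen A B = altLen B A := by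
  simp only [altLen, isAltSeq_iff, or_comm]

end AltSeq

section Intervals

variable {m₀ k : ℕ} {X : Finset ℕ}

lemma card_le_of_unionIntervals (hX : UnionIntervals m₀ k X) {S : Finset ℕ} (hS : S ⊆ X)
    (hgap : ∀ x ∈ S, ∀ y ∈ S, x < y → ∃ z ∉ X, x < z ∧ z < y) : #S ≤ k := by
  obtain ⟨k', hk', e, -, rfl⟩ := hX
  refine le_trans ?_ ((card_fin k').trans_le hk')
  have hsep : ∀ t, ∀ x ∈ S, ∀ y ∈ S,
      x ∈ Icc (e t).1 (e t).2 → y ∈ Icc (e t).1 (e t).2 → ¬x < y := by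
    intro t x hx y hy hxt hyt hxy
    obtain ⟨z, hz, hxz, hzy⟩ := hgap x hx y hy hxy
    exact hz (mem_sup.2 ⟨t, mem_univ t,
      mem_Icc.2 ⟨(mem_Icc.1 hxt).1.trans hxz.le, hzy.le.trans (mem_Icc.1 hyt).2⟩⟩)
  refine card_le_card_of_forall_subsingleton (t := univ) (fun x t => x ∈ Icc (e t).1 (e t).2)
    (fun x hx => by simpa using mem_sup.1 (hS hx)) fun t _ x hx y hy => ?_
  exact le_antisymm (not_lt.1 (hsep t y hy.1 x hx.1 hy.2 hx.2))
    (not_lt.1 (hsep t x hx.1 y hy.1 hx.2 hy.2))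

lemma StrictMono.length_le_of_unionIntervals (hX : UnionIntervals m₀ k X) {m : ℕ}
    {f : Fin m → ℕ} (hf : StrictMono f) {p : ℕ} (hp : p < 2)
    (halt : ∀ j : Fin m, f j ∈ X ↔ (j : ℕ) % 2 = p) : m ≤ 2 * k + p := by
  set g : Fin ((m + 1 - p) / 2) → ℕ := fun t => f ⟨2 * t + p, by omega⟩
  have hg : StrictMono g := fun s t hst => hf (by simp only [Fin.mk_lt_mk]; omega)
  have hcard := card_le_of_unionIntervals hX (S := univ.image g)
    (by
      simp only [image_subset_iff, mem_univ, forall_const]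
      exact fun t => (halt _).2 (show (2 * t + p) % 2 = p by omega))
    (by
      simp only [mem_image, mem_univ, true_and]
      rintro _ ⟨s, rfl⟩ _ ⟨t, rfl⟩ hst
      have hst' : (s : ℕ) < t := hg.lt_iff_lt.1 hst
      refine ⟨f ⟨2 * s + p + 1, by omega⟩, fun h => ?_, hf (by simp),
        hf (by simp only [Fin.mk_lt_mk]; omega)⟩
      have : (2 * s + p + 1) % 2 = p := (halt _).1 h
      omega)
  rw [card_image_of_injective _ hg.injective, card_fin] at hcard
  omega

end Intervals

namespace IsAltSeqFrom

variable {A B X : Finset ℕ} {m : ℕ} {f : Fin m → ℕ}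

lemma mem_iff_even (hf : IsAltSeqFrom A B f) (hin : A \ B ⊆ X) (hout : Disjoint (B \ A) X)
    (j : Fin m) : f j ∈ X ↔ (j : ℕ) % 2 = 0 := by
  refine ⟨fun h => ?_, fun h => hin (hf.2.1 j h)⟩
  by_contra hj
  exact disjoint_left.1 hout (hf.2.2 j (by omega)) h

lemma mem_iff_odd (hf : IsAltSeqFrom A B f) (hin : B \ A ⊆ X) (hout : Disjoint (A \ B) X)
    (j : Fin m) : f j ∈ X ↔ (j : ℕ) % 2 = 1 := by
  refine ⟨fun h => ?_, fun h => hin (hf.2.2 j h)⟩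
  by_contra hj
  exact disjoint_left.1 hout (hf.2.1 j (by omega)) h

lemma length_le_of_unionIntervals {m₀ k : ℕ} (hf : IsAltSeqFrom A B f)
    (hX : UnionIntervals m₀ k X) (hin : A \ B ⊆ X) (hout : Disjoint (B \ A) X) : m ≤ 2 * k :=
  hf.1.length_le_of_unionIntervals hX two_pos (hf.mem_iff_even hin hout)

end IsAltSeqFrom

lemma altLen_le_of_unionIntervals {A B X : Finset ℕ} {m₀ k : ℕ} (hX : UnionIntervals m₀ k X)
    (hin : A \ B ⊆ X) (hout : Disjoint (B \ A) X) : altLen A B ≤ 2 * k + 1 := by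
  refine altLen_le_iff.2 fun m f hf => ?_
  rcases isAltSeq_iff.1 hf with hf | hf
  · exact (hf.length_le_of_unionIntervals hX hin hout).trans (Nat.le_succ _)
  · exact hf.1.length_le_of_unionIntervals hX one_lt_two (hf.mem_iff_odd hin hout)

lemma altLen_le_of_unionIntervals_or_compl {r m₀ : ℕ} (hr : Odd r) {A B : Finset ℕ}
    (hB : B ⊆ Icc 1 m₀)
    (hA : UnionIntervals m₀ ((r - 1) / 2) A ∨
      UnionIntervals m₀ ((r - 1) / 2) (Icc 1 m₀ \ A)) :
    altLen A B ≤ r := by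
  have hr' : 2 * ((r - 1) / 2) + 1 = r := by obtain ⟨t, rfl⟩ := hr; omega
  rcases hA with hX | hX
  · exact hr' ▸ altLen_le_of_unionIntervals hX sdiff_subset sdiff_disjoint
  · rw [altLen_comm]
    exact hr' ▸ altLen_le_of_unionIntervals hX (sdiff_subset_sdiff hB le_rfl)
      (disjoint_sdiff.mono_left sdiff_subset)

lemma not_surrounds_of_forall_lt {A B : Finset ℕ} {x : ℕ} (hx : x ∈ A \ B)
    (h : ∀ y ∈ B \ A, y < x) : ¬Surrounds B A := fun hs =>
  not_lt.2 ((Finset.max_le fun y hy => WithBot.coe_le_coe.2 (h y hy).le).trans (le_max hx)) hs.2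

namespace IsAltSeqFrom

variable {A B : Finset ℕ} {m : ℕ} {f : Fin m → ℕ}

/-- An alternating sequence of maximal odd length starts and ends in `A \ B`; anything of
`B \ A` outside its range could be added to it. -/
lemma surrounds (hf : IsAltSeqFrom A B f) (hm : Odd m) (hmax : altLen A B ≤ m) :
    Surrounds A B := by
  have hm0 : 0 < m := hm.pos
  set first : Fin m := ⟨0, hm0⟩
  set last : Fin m := ⟨m - 1, by omega⟩
  have hfirst : f first ∈ A \ B := hf.2.1 first rfl
  have hlast : f last ∈ A \ B := hf.2.1 last (by obtain ⟨t, rfl⟩ := hm; simp [last])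
  have hne : ∀ x ∈ A \ B, ∀ b ∈ B \ A, b ≠ x := fun x hx b hb h =>
    (mem_sdiff.1 hb).2 (h ▸ (mem_sdiff.1 hx).1)
  have hlow : ∀ b ∈ B \ A, f first < b := fun b hb => by
    by_contra! hle
    have hlt : ∀ j, b < f j := fun j =>
      (hle.lt_of_ne (hne _ hfirst b hb)).trans_le
        (hf.1.monotone (Fin.le_def.2 (Nat.zero_le _)))
    have := (hf.cons hb hlt).isAltSeq_swap.le_altLen
    omega
  have hhigh : ∀ b ∈ B \ A, b < f last := fun b hb => by
    by_contra! hle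
    have hlt : ∀ j, f j < b := fun j =>
      (hf.1.monotone (Fin.le_def.2 (by simp only [last]; omega))).trans_lt
        (hle.lt_of_ne' (hne _ hlast b hb))
    have := (hf.snoc hlt (fun h => by obtain ⟨t, rfl⟩ := hm; omega) fun _ => hb).isAltSeq
      |>.le_altLen
    omega
  refine ⟨(min_le hfirst).trans_lt ?_, lt_of_lt_of_le ?_ (le_max hlast)⟩
  · rw [min_eq_inf_withTop]
    exact (Finset.lt_inf_iff (WithTop.coe_lt_top _)).2 fun b hb =>
      WithTop.coe_lt_coe.2 (hlow b hb)
  · rw [max_eq_sup_coe]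
    exact (Finset.sup_lt_iff (WithBot.bot_lt_coe _)).2 fun b hb =>
      WithBot.coe_lt_coe.2 (hhigh b hb)

end IsAltSeqFrom

lemma IsAltSeqFrom.not_weaklySep_insert {r n : ℕ} (hr : Odd r) {A B : Finset ℕ}
    {f : Fin (r + 1) → ℕ} (hf : IsAltSeqFrom A B f) (hlt : ∀ x ∈ A ∪ B, x < n)
    (hcard : #B ≤ #A) : ¬WeaklySep r (insert n A) B := by
  intro hsep
  have hnA : n ∉ A := fun h => (hlt n (mem_union_left _ h)).false
  have hnB : n ∉ B := fun h => (hlt n (mem_union_right _ h)).false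
  have hnAB : n ∈ insert n A \ B := mem_sdiff.2 ⟨mem_insert_self n A, hnB⟩
  have hBA : ∀ y ∈ B \ insert n A, y < n := fun y hy =>
    hlt y (mem_union_right _ (mem_sdiff.1 hy).1)
  have hg : IsAltSeqFrom (insert n A) B (Fin.snoc f n : Fin (r + 2) → ℕ) := by
    refine (hf.mono (sdiff_subset_sdiff (subset_insert n A) le_rfl) ?_).snoc
      (fun j => ?_) (fun _ => hnAB) (fun h => by obtain ⟨t, rfl⟩ := hr; omega)
    · intro y hy
      rw [mem_sdiff] at hy ⊢
      rw [mem_insert, not_or]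
      exact ⟨hy.1, fun h => hnB (h ▸ hy.1), hy.2⟩
    · rcases Nat.mod_two_eq_zero_or_one j with hj | hj
      · exact hlt _ (mem_union_left _ (mem_sdiff.1 (hf.2.1 j hj)).1)
      · exact hlt _ (mem_union_right _ (mem_sdiff.1 (hf.2.2 j hj)).1)
  rcases hsep.2 (le_antisymm hsep.1 hg.isAltSeq.le_altLen) with ⟨-, hc⟩ | ⟨hs, -⟩
  · rw [card_insert_of_notMem hnA] at hc
    omega
  · exact not_surrounds_of_forall_lt hnAB hBA hs

lemma altLen_le_of_weaklySep_insert {r n : ℕ} (hr : Odd r) {A B : Finset ℕ}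
    (hlt : ∀ x ∈ A ∪ B, x < n) (hcard : #A = #B) (hA : WeaklySep r (insert n A) B)
    (hB : WeaklySep r (insert n B) A) : altLen A B ≤ r := by
  by_contra! h
  obtain ⟨f, hf⟩ := exists_isAltSeq_altLen A B
  rcases isAltSeq_iff.1 hf with hf | hf
  · exact (hf.castLE h).not_weaklySep_insert hr hlt hcard.ge hA
  · exact (hf.castLE h).not_weaklySep_insert hr (union_comm A B ▸ hlt) hcard.le hB

namespace MemDscr

variable {r n i : ℕ} {W : Finset (Finset ℕ)} {A B : Finset ℕ}

lemma card_le_of_not_unionIntervals (hA : MemDscr r n i W A)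
    (h : ¬UnionIntervals (n - 1) ((r - 1) / 2) A) : #A ≤ i := by
  obtain ⟨-, hT | hS | hC⟩ := hA
  exacts [hT.1.le, absurd hS.2.2 h, hC.1.le]

lemma le_card_of_not_unionIntervals_compl (hA : MemDscr r n i W A)
    (h : ¬UnionIntervals (n - 1) ((r - 1) / 2) (Icc 1 (n - 1) \ A)) : i ≤ #A := by
  obtain ⟨-, hT | hS | hC⟩ := hA
  exacts [hT.1.ge, hS.1.le, absurd hC.2 h]

lemma altLen_le (hr : Odd r) (hW : ∀ A ∈ W, ∀ B ∈ W, WeaklySep r A B)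
    (hA : MemDscr r n i W A) (hB : MemDscr r n i W B) : altLen A B ≤ r := by
  obtain ⟨hAsub, hAT | hAS | hAC⟩ := hA
  · obtain ⟨hBsub, hBT | hBS | hBC⟩ := hB
    · refine altLen_le_of_weaklySep_insert hr (fun x hx => ?_) (hAT.1.trans hBT.1.symm)
        (hW _ hAT.2.2 _ hBT.2.1) (hW _ hBT.2.2 _ hAT.2.1)
      have := mem_Icc.1 (union_subset hAsub hBsub hx)
      omega
    · exact altLen_comm A B ▸ altLen_le_of_unionIntervals_or_compl hr hAsub (.inl hBS.2.2)
    · exact altLen_comm A B ▸ altLen_le_of_unionIntervals_or_compl hr hAsub (.inr hBC.2)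
  · exact altLen_le_of_unionIntervals_or_compl hr hB.1 (.inl hAS.2.2)
  · exact altLen_le_of_unionIntervals_or_compl hr hB.1 (.inr hAC.2)

lemma surrounds_and_card_le (hr : Odd r) (hA : MemDscr r n i W A) (hB : MemDscr r n i W B)
    {f : Fin r → ℕ} (hf : IsAltSeqFrom A B f) (hmax : altLen A B ≤ r) :
    Surrounds A B ∧ #A ≤ #B := by
  have hr' : 2 * ((r - 1) / 2) < r := by obtain ⟨t, rfl⟩ := hr; omega
  have hAS : ¬UnionIntervals (n - 1) ((r - 1) / 2) A := fun hX =>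
    (hf.length_le_of_unionIntervals hX sdiff_subset sdiff_disjoint).not_gt hr'
  have hBC : ¬UnionIntervals (n - 1) ((r - 1) / 2) (Icc 1 (n - 1) \ B) := fun hX =>
    (hf.length_le_of_unionIntervals hX (sdiff_subset_sdiff hA.1 le_rfl)
      (disjoint_sdiff.mono_left sdiff_subset)).not_gt hr'
  exact ⟨hf.surrounds hr hmax,
    (hA.card_le_of_not_unionIntervals hAS).trans (hB.le_card_of_not_unionIntervals_compl hBC)⟩

end MemDscr

theorem Dscr_weaklySep_general (r n : ℕ) (hr : Odd r) (hr3 : 3 ≤ r)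
    (W : Finset (Finset ℕ))
    (hWsep : ∀ A ∈ W, ∀ B ∈ W, WeaklySep r A B) (i : ℕ) :
    ∀ A B : Finset ℕ, MemDscr r n i W A → MemDscr r n i W B →
      WeaklySep (r - 2) A B := by
  intro A B hA hB
  rw [WeaklySep, Nat.sub_add_cancel (by omega : 2 ≤ r)]
  refine ⟨hA.altLen_le hr hWsep hB, fun heq => ?_⟩
  obtain ⟨f, hf⟩ : ∃ f : Fin r → ℕ, IsAltSeq A B f := heq ▸ exists_isAltSeq_altLen A B
  rcases isAltSeq_iff.1 hf with hf | hf
  · exact .inl (hA.surrounds_and_card_le hr hB hf heq.le)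
  · exact .inr (hB.surrounds_and_card_le hr hA hf (altLen_comm A B ▸ heq).le)

/-- (Claim 2) the collection D^i is weakly (r-2)-separated. -/
theorem Dscr_weaklySep (r n : ℕ) (hr : Odd r) (hr3 : 3 ≤ r) (hn : 2 ≤ n)
    (W : Finset (Finset ℕ)) (hWsub : ∀ A ∈ W, A ⊆ Finset.Icc 1 n)
    (hWsep : ∀ A ∈ W, ∀ B ∈ W, WeaklySep r A B) (i : ℕ) :
    ∀ A B : Finset ℕ, MemDscr r n i W A → MemDscr r n i W B →
      WeaklySep (r - 2) A B :=
  Dscr_weaklySep_general r n hr hr3 W hWsep i
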